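/- arXiv:1911.12344 — 5 statements merged into one kernel-verified Lean document; each statement's English description precedes it below -/
import Mathlib

section
/- Let X be a set, K : X × X → ℂ a positive definite kernel with reproducing kernel Hilbert space H(K), let (B, F_B, μ) be a sigma-finite measure space, (k_x)_{x∈X} a family in L²(B,μ), and set K^{(μ)}(x,y) := ⟨k_x, k_y⟩_{L²(μ)}. If K^{(μ)} ≪ K, then for every φ ∈ L²(B,μ) the function S_Bφ : X → ℂ defined by (S_Bφ)(x) := ⟨k_x, φ⟩_{L²(μ)} = ∫_B conj(k_x(b))·φ(b) dμ(b) belongs to H(K) and satisfies ‖S_Bφ‖_{H(K)} ≤ ‖φ‖_{L²(μ)}. -/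
open MeasureTheory
open scoped ComplexInnerProductSpace ComplexOrder

noncomputable section

/-- The quadratic form `∑ᵢ∑ⱼ conj(cᵢ)·cⱼ·K(xᵢ,xⱼ)` attached to a kernel `K`. -/
def pdSum {X : Type*} (K : X → X → ℂ) {N : ℕ} (x : Fin N → X) (c : Fin N → ℂ) : ℂ :=
  ∑ i, ∑ j, (starRingEnd ℂ) (c i) * c j * K (x i) (x j)

/-- `K` is a positive definite kernel. -/
def IsPosDefKernel {X : Type*} (K : X → X → ℂ) : Prop :=
  ∀ (N : ℕ) (x : Fin N → X) (c : Fin N → ℂ), 0 ≤ pdSum K x c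

/-- The order `K ≪ L` on kernels. -/
def KernelLE {X : Type*} (K L : X → X → ℂ) : Prop :=
  ∀ (N : ℕ) (x : Fin N → X) (c : Fin N → ℂ), pdSum K x c ≤ pdSum L x c

/-!
The reproducing property makes `K(x, y) = ⟪kH x, kH y⟫`, and `K^{(μ)}(x, y) = ⟪k x, k y⟫`, so
`K^{(μ)} ≪ K` says exactly that `‖∑ cᵢ k xᵢ‖ ≤ ‖∑ cᵢ kH xᵢ‖`. Hence `∑ cᵢ kH xᵢ ↦ ⟪φ, ∑ cᵢ k xᵢ⟫`
is a well-defined functional of norm at most `‖φ‖` on the span of the `kH x`; extending it by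
Hahn–Banach and representing it by Riesz gives `g ∈ H` with `⟪kH x, g⟫ = ⟪k x, φ⟫` and
`‖g‖ ≤ ‖φ‖`.
-/

open Finsupp
open scoped InnerProductSpace

lemma pdSum_inner_eq_norm_sq {X E : Type*} [NormedAddCommGroup E] [InnerProductSpace ℂ E]
    (u : X → E) {N : ℕ} (x : Fin N → X) (c : Fin N → ℂ) :
    pdSum (fun a b => ⟪u a, u b⟫) x c = (‖∑ i, c i • u (x i)‖ : ℂ) ^ 2 := by
  trans ⟪∑ i, c i • u (x i), ∑ i, c i • u (x i)⟫
  · simp only [pdSum, inner_sum, sum_inner, inner_smul_left, inner_smul_right, Finset.mul_sum]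
    rw [Finset.sum_comm]
    exact Finset.sum_congr rfl fun j _ => Finset.sum_congr rfl fun i _ => by ring
  · exact inner_self_eq_norm_sq_to_K _

lemma norm_sum_le_of_kernelLE_gram {X E F : Type*} [NormedAddCommGroup E] [InnerProductSpace ℂ E]
    [NormedAddCommGroup F] [InnerProductSpace ℂ F] {u : X → E} {v : X → F}
    (h : KernelLE (fun a b => ⟪u a, u b⟫) (fun a b => ⟪v a, v b⟫))
    {N : ℕ} (x : Fin N → X) (c : Fin N → ℂ) :
    ‖∑ i, c i • u (x i)‖ ≤ ‖∑ i, c i • v (x i)‖ := by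
  have hsq := h N x c
  rw [pdSum_inner_eq_norm_sq, pdSum_inner_eq_norm_sq] at hsq
  norm_cast at hsq
  exact pow_le_pow_iff_left₀ (norm_nonneg _) (norm_nonneg _) two_ne_zero |>.mp hsq

lemma Finsupp.linearCombination_eq_sum_equivFin {X R M : Type*} [Semiring R] [AddCommMonoid M]
    [Module R M] (v : X → M) (d : X →₀ R) :
    linearCombination R v d =
      ∑ i, d (d.support.equivFin.symm i) • v (d.support.equivFin.symm i) := by
  rw [linearCombination_apply, Finsupp.sum, ← Finset.sum_coe_sort]
  exact (Fintype.sum_equiv d.support.equivFin.symm _ _ fun _ => rfl).symm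

lemma norm_linearCombination_le_of_kernelLE_gram {X E F : Type*} [NormedAddCommGroup E]
    [InnerProductSpace ℂ E] [NormedAddCommGroup F] [InnerProductSpace ℂ F]
    {u : X → E} {v : X → F}
    (h : KernelLE (fun a b => ⟪u a, u b⟫) (fun a b => ⟪v a, v b⟫)) (d : X →₀ ℂ) :
    ‖linearCombination ℂ u d‖ ≤ ‖linearCombination ℂ v d‖ := by
  rw [linearCombination_eq_sum_equivFin, linearCombination_eq_sum_equivFin]
  exact norm_sum_le_of_kernelLE_gram h _ _

lemma LinearMap.exists_strongDual_comp_eq_of_norm_le {𝕜 M V : Type*} [RCLike 𝕜]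
    [AddCommGroup M] [Module 𝕜 M] [NormedAddCommGroup V] [NormedSpace 𝕜 V]
    (L : M →ₗ[𝕜] V) (f : M →ₗ[𝕜] 𝕜)
    {C : ℝ} (hC : 0 ≤ C) (hf : ∀ m, ‖f m‖ ≤ C * ‖L m‖) :
    ∃ F : StrongDual 𝕜 V, (∀ m, F (L m) = f m) ∧ ‖F‖ ≤ C := by
  have hker : LinearMap.ker L ≤ LinearMap.ker f := fun m hm => by
    simpa [LinearMap.mem_ker.mp hm] using hf m
  set f₀ : LinearMap.range L →ₗ[𝕜] 𝕜 :=
    (LinearMap.ker L).liftQ f hker ∘ₗ L.quotKerEquivRange.symm.toLinearMap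
  have hf₀ : ∀ m, f₀ ⟨L m, LinearMap.mem_range_self L m⟩ = f m := fun m => by
    simp [f₀, LinearMap.quotKerEquivRange_symm_apply_image]
  have hbound : ∀ w, ‖f₀ w‖ ≤ C * ‖w‖ := by
    rintro ⟨_, m, rfl⟩
    simpa [hf₀] using hf m
  obtain ⟨F, hFext, hFnorm⟩ := exists_extension_norm_eq _ (f₀.mkContinuous C hbound)
  refine ⟨F, fun m => ?_, hFnorm ▸ f₀.mkContinuous_norm_le hC hbound⟩
  rw [← hf₀]
  exact hFext ⟨L m, _⟩

theorem exists_inner_eq_of_norm_linearCombination_le {𝕜 X E H : Type*} [RCLike 𝕜]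
    [NormedAddCommGroup E] [InnerProductSpace 𝕜 E]
    [NormedAddCommGroup H] [InnerProductSpace 𝕜 H] [CompleteSpace H] {u : X → E} {v : X → H}
    (h : ∀ d : X →₀ 𝕜, ‖linearCombination 𝕜 u d‖ ≤ ‖linearCombination 𝕜 v d‖) (φ : E) :
    ∃ g : H, (∀ x, ⟪v x, g⟫_𝕜 = ⟪u x, φ⟫_𝕜) ∧ ‖g‖ ≤ ‖φ‖ := by
  obtain ⟨F, hF, hFnorm⟩ := (linearCombination 𝕜 v).exists_strongDual_comp_eq_of_norm_le
    ((innerₛₗ 𝕜 φ).comp (linearCombination 𝕜 u)) (norm_nonneg φ)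
    fun d => (norm_inner_le_norm _ _).trans (by gcongr; exact h d)
  refine ⟨(InnerProductSpace.toDual 𝕜 H).symm F, fun x => ?_, ?_⟩
  · rw [← inner_conj_symm, InnerProductSpace.toDual_symm_apply, ← inner_conj_symm (u x)]
    simpa using congrArg (starRingEnd 𝕜) (hF (single x 1))
  · simpa using hFnorm

theorem stmt_3_general {X : Type*} (K : X → X → ℂ)
    {H : Type*} [NormedAddCommGroup H] [InnerProductSpace ℂ H] [CompleteSpace H]
    (ι : H →ₗ[ℂ] (X → ℂ))
    (kH : X → H) (hkH : ∀ x, ι (kH x) = fun y => K y x)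
    (hrep : ∀ (g : H) (x : X), ι g x = ⟪kH x, g⟫)
    {B : Type*} [MeasurableSpace B] (μ : Measure B)
    (k : X → Lp ℂ 2 μ)
    (hord : KernelLE (fun x y => ⟪k x, k y⟫) K) :
    ∀ φ : Lp ℂ 2 μ, ∃ g : H,
      ι g = (fun x => ⟪k x, φ⟫) ∧ ‖g‖ ≤ ‖φ‖ := by
  have hgram : K = fun a b => ⟪kH a, kH b⟫ := by
    ext a b
    rw [← hrep, hkH]
  subst hgram
  intro φ
  obtain ⟨g, hg, hnorm⟩ := exists_inner_eq_of_norm_linearCombination_le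
    (norm_linearCombination_le_of_kernelLE_gram hord) φ
  exact ⟨g, funext fun x => (hrep g x).trans (hg x), hnorm⟩

theorem stmt_3 {X : Type*} (K : X → X → ℂ) (hK : IsPosDefKernel K)
    {H : Type*} [NormedAddCommGroup H] [InnerProductSpace ℂ H] [CompleteSpace H]
    (ι : H →ₗ[ℂ] (X → ℂ)) (hι : Function.Injective ι)
    (kH : X → H) (hkH : ∀ x, ι (kH x) = fun y => K y x)
    (hrep : ∀ (g : H) (x : X), ι g x = ⟪kH x, g⟫)
    {B : Type*} [MeasurableSpace B] (μ : Measure B) [SigmaFinite μ]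
    (k : X → Lp ℂ 2 μ)
    (hord : KernelLE (fun x y => ⟪k x, k y⟫) K) :
    ∀ φ : Lp ℂ 2 μ, ∃ g : H,
      ι g = (fun x => ⟪k x, φ⟫) ∧ ‖g‖ ≤ ‖φ‖ :=
  stmt_3_general K ι kH hkH hrep μ k hord
end
end

section
/- Let (V, E, c) be a connected, locally finite resistance network. Then for every pair of vertices x, y ∈ V there exists a constant C_{x,y} ≥ 0 such that for every function f : V → ℂ of finite energy, |f(x) − f(y)|² ≤ C_{x,y} · ‖f‖²_E. -/
noncomputable section

/-- The summand `c_{xy}·|f(x) − f(y)|²` over the set of (ordered) edges; the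
energy of `f` is `(1/2)·∑'` of this. -/
def edgeEnergySummand {V : Type*} (E : V → V → Prop) (c : V → V → ℝ) (f : V → ℂ)
    (p : {p : V × V // E p.1 p.2}) : ℝ :=
  c p.1.1 p.1.2 * ‖f p.1.1 - f p.1.2‖ ^ 2

/-! Along a path from `x` to `y`, the triangle inequality bounds `|f(x) − f(y)|` by the sum of
the increments over the edges of the path, and each increment `|f(a) − f(b)|` over an edge is at
most `√(2/c_{ab}) · ‖f‖_E`, because the single term `c_{ab}|f(a) − f(b)|²` of the energy series
is at most its sum. Squaring gives `C_{x,y} = (∑ᵢ √(2/c_{pᵢpᵢ₊₁}))²`. -/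

theorem Fin.sum_castSucc_sub_succ {G : Type*} [AddCommGroup G] {n : ℕ} (g : Fin (n + 1) → G) :
    ∑ i : Fin n, (g i.castSucc - g i.succ) = g 0 - g (Fin.last n) := by
  induction n with
  | zero => simp
  | succ n ih =>
    rw [Fin.sum_univ_castSucc]
    simp only [Fin.succ_castSucc, ih fun i ↦ g i.castSucc, Fin.castSucc_zero, Fin.succ_last]
    abel

section Energy

variable {V : Type*} (E : V → V → Prop) (c : V → V → ℝ)

def energy (f : V → ℂ) : ℝ :=
  (1 / 2) * ∑' p, edgeEnergySummand E c f p

variable {E c} (hc_pos : ∀ x y, E x y → 0 < c x y) {f : V → ℂ}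
include hc_pos

theorem edgeEnergySummand_nonneg (p : {p : V × V // E p.1 p.2}) :
    0 ≤ edgeEnergySummand E c f p :=
  mul_nonneg (hc_pos _ _ p.2).le (sq_nonneg _)

theorem energy_nonneg : 0 ≤ energy E c f :=
  mul_nonneg (by norm_num) (tsum_nonneg (edgeEnergySummand_nonneg hc_pos))

theorem norm_sub_le_of_adj (hf : Summable (edgeEnergySummand E c f)) {a b : V} (hab : E a b) :
    ‖f a - f b‖ ≤ √(2 / c a b) * √(energy E c f) := by
  have hcab := hc_pos a b hab
  have hterm : c a b * ‖f a - f b‖ ^ 2 ≤ 2 * energy E c f :=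
    calc c a b * ‖f a - f b‖ ^ 2 = edgeEnergySummand E c f ⟨(a, b), hab⟩ := rfl
      _ ≤ ∑' q, edgeEnergySummand E c f q :=
        hf.le_tsum _ fun q _ ↦ edgeEnergySummand_nonneg hc_pos q
      _ = 2 * energy E c f := by rw [energy]; ring
  rw [← Real.sqrt_mul (by positivity), ← Real.sqrt_sq (norm_nonneg _)]
  refine Real.sqrt_le_sqrt ?_
  rw [div_mul_eq_mul_div, le_div_iff₀ hcab]
  linarith

theorem norm_sub_le_of_path (hf : Summable (edgeEnergySummand E c f)) {n : ℕ}
    {p : Fin (n + 1) → V} (hp : ∀ i : Fin n, E (p i.castSucc) (p i.succ)) :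
    ‖f (p 0) - f (p (Fin.last n))‖
      ≤ (∑ i : Fin n, √(2 / c (p i.castSucc) (p i.succ))) * √(energy E c f) := by
  have htelescope : f (p 0) - f (p (Fin.last n)) = ∑ i : Fin n, (f (p i.castSucc) - f (p i.succ)) :=
    (Fin.sum_castSucc_sub_succ (f ∘ p)).symm
  rw [htelescope, Finset.sum_mul]
  exact (norm_sum_le _ _).trans
    (Finset.sum_le_sum fun i _ ↦ norm_sub_le_of_adj hc_pos hf (hp i))

end Energy

theorem stmt_6_general {V : Type*} (E : V → V → Prop) (c : V → V → ℝ)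
    (hc_pos : ∀ x y, E x y → 0 < c x y)
    (hconn : ∀ x y : V, ∃ (n : ℕ) (p : Fin (n + 1) → V), p 0 = x ∧ p (Fin.last n) = y ∧
      ∀ i : Fin n, E (p i.castSucc) (p i.succ))
    (x y : V) :
    ∃ C : ℝ, 0 ≤ C ∧ ∀ f : V → ℂ, Summable (edgeEnergySummand E c f) →
      ‖f x - f y‖ ^ 2 ≤ C * ((1 / 2) * ∑' p, edgeEnergySummand E c f p) := by
  obtain ⟨n, p, rfl, rfl, hp⟩ := hconn x y
  set K := ∑ i : Fin n, √(2 / c (p i.castSucc) (p i.succ))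
  refine ⟨K ^ 2, sq_nonneg K, fun f hf ↦ ?_⟩
  calc ‖f (p 0) - f (p (Fin.last n))‖ ^ 2
      ≤ (K * √(energy E c f)) ^ 2 :=
        pow_le_pow_left₀ (norm_nonneg _) (norm_sub_le_of_path hc_pos hf hp) 2
    _ = K ^ 2 * energy E c f := by rw [mul_pow, Real.sq_sqrt (energy_nonneg hc_pos)]

theorem stmt_6 {V : Type*} [Countable V] (E : V → V → Prop) (c : V → V → ℝ)
    (hE_symm : ∀ x y, E x y → E y x) (hE_irrefl : ∀ x, ¬ E x x)
    (hlf : ∀ x, {y | E x y}.Finite)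
    (hc_symm : ∀ x y, c x y = c y x) (hc_pos : ∀ x y, E x y → 0 < c x y)
    (hconn : ∀ x y : V, ∃ (n : ℕ) (p : Fin (n + 1) → V), p 0 = x ∧ p (Fin.last n) = y ∧
      ∀ i : Fin n, E (p i.castSucc) (p i.succ))
    (x y : V) :
    ∃ C : ℝ, 0 ≤ C ∧ ∀ f : V → ℂ, Summable (edgeEnergySummand E c f) →
      ‖f x - f y‖ ^ 2 ≤ C * ((1 / 2) * ∑' p, edgeEnergySummand E c f p) :=
  stmt_6_general E c hc_pos hconn x y
end
end

section
/- Let X be a set and let K₁, K₂, L₁, L₂ : X × X → ℂ be positive definite kernels with K₁ ≪ L₁ and K₂ ≪ L₂. Then the pointwise products K₁·K₂ and L₁·L₂ (defined by (K₁K₂)(x,y) := K₁(x,y)·K₂(x,y)) are positive definite kernels, and K₁·K₂ ≪ L₁·L₂. -/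
/-!
On finitely many points, a positive definite kernel is the same as a positive semidefinite Gram
matrix (over `ℂ`, nonnegativity of the quadratic form forces hermiticity), so products of positive
definite kernels are positive definite by the Schur product theorem. For the order, write
`L₁L₂ - K₁K₂ = (L₁ - K₁)L₂ + K₁(L₂ - K₂)`: both summands are products of positive definite kernels.
-/

open scoped ComplexOrder

noncomputable section

open Matrix

lemma Matrix.posSemidef_of_forall_star_dotProduct_mulVec_nonneg {n : Type*} [Fintype n]
    {A : Matrix n n ℂ} (hA : ∀ c, 0 ≤ star c ⬝ᵥ A *ᵥ c) : A.PosSemidef := by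
  classical
  refine .of_dotProduct_mulVec_nonneg ?_ hA
  rw [← isSymmetric_toEuclideanLin_iff, LinearMap.isSymmetric_iff_inner_map_self_real]
  intro v
  rw [← inner_conj_symm, Complex.conj_conj, toLpLin_apply]
  have hinner : inner ℂ v (WithLp.toLp 2 (A *ᵥ v.ofLp)) = star v.ofLp ⬝ᵥ A *ᵥ v.ofLp := by
    simp [EuclideanSpace.inner_eq_star_dotProduct, dotProduct_comm]
  rw [hinner]
  exact (hA _).isSelfAdjoint.symm

section Kernel

variable {X : Type*}

def kernelMatrix (K : X → X → ℂ) {N : ℕ} (x : Fin N → X) : Matrix (Fin N) (Fin N) ℂ :=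
  Matrix.of fun i j => K (x i) (x j)

lemma pdSum_eq_star_dotProduct_mulVec (K : X → X → ℂ) {N : ℕ} (x : Fin N → X) (c : Fin N → ℂ) :
    pdSum K x c = star c ⬝ᵥ kernelMatrix K x *ᵥ c := by
  simp only [pdSum, dotProduct, mulVec, kernelMatrix, of_apply, Pi.star_apply,
    RCLike.star_def, Finset.mul_sum]
  exact Finset.sum_congr rfl fun i _ => Finset.sum_congr rfl fun j _ => by ring

lemma pdSum_add (K L : X → X → ℂ) {N : ℕ} (x : Fin N → X) (c : Fin N → ℂ) :
    pdSum (K + L) x c = pdSum K x c + pdSum L x c := by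
  simp only [pdSum, Pi.add_apply, mul_add, Finset.sum_add_distrib]

lemma pdSum_sub (K L : X → X → ℂ) {N : ℕ} (x : Fin N → X) (c : Fin N → ℂ) :
    pdSum (K - L) x c = pdSum K x c - pdSum L x c := by
  simp only [pdSum, Pi.sub_apply, mul_sub, Finset.sum_sub_distrib]

lemma isPosDefKernel_iff_posSemidef {K : X → X → ℂ} :
    IsPosDefKernel K ↔ ∀ (N : ℕ) (x : Fin N → X), (kernelMatrix K x).PosSemidef := by
  simp only [IsPosDefKernel, pdSum_eq_star_dotProduct_mulVec]
  exact forall₂_congr fun N x =>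
    ⟨posSemidef_of_forall_star_dotProduct_mulVec_nonneg, PosSemidef.dotProduct_mulVec_nonneg⟩

lemma kernelLE_iff_isPosDefKernel_sub {K L : X → X → ℂ} :
    KernelLE K L ↔ IsPosDefKernel (L - K) := by
  simp only [KernelLE, IsPosDefKernel, pdSum_sub, sub_nonneg]

lemma IsPosDefKernel.add {K L : X → X → ℂ} (hK : IsPosDefKernel K) (hL : IsPosDefKernel L) :
    IsPosDefKernel (K + L) := fun N x c => by
  rw [pdSum_add]
  exact add_nonneg (hK N x c) (hL N x c)

/-- Schur product theorem for kernels. -/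
lemma IsPosDefKernel.mul {K L : X → X → ℂ} (hK : IsPosDefKernel K) (hL : IsPosDefKernel L) :
    IsPosDefKernel (K * L) := by
  rw [isPosDefKernel_iff_posSemidef] at hK hL ⊢
  exact fun N x => (hK N x).hadamard (hL N x)

lemma KernelLE.mul {K₁ K₂ L₁ L₂ : X → X → ℂ} (hK₁ : IsPosDefKernel K₁) (hL₂ : IsPosDefKernel L₂)
    (h₁ : KernelLE K₁ L₁) (h₂ : KernelLE K₂ L₂) : KernelLE (K₁ * K₂) (L₁ * L₂) := by
  rw [kernelLE_iff_isPosDefKernel_sub] at h₁ h₂ ⊢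
  have hsplit : L₁ * L₂ - K₁ * K₂ = (L₁ - K₁) * L₂ + K₁ * (L₂ - K₂) := by ring
  rw [hsplit]
  exact (h₁.mul hL₂).add (hK₁.mul h₂)

end Kernel

theorem stmt_9 {X : Type*} (K₁ K₂ L₁ L₂ : X → X → ℂ)
    (hK₁ : IsPosDefKernel K₁) (hK₂ : IsPosDefKernel K₂)
    (hL₁ : IsPosDefKernel L₁) (hL₂ : IsPosDefKernel L₂)
    (h₁ : KernelLE K₁ L₁) (h₂ : KernelLE K₂ L₂) :
    IsPosDefKernel (fun x y => K₁ x y * K₂ x y) ∧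
    IsPosDefKernel (fun x y => L₁ x y * L₂ x y) ∧
    KernelLE (fun x y => K₁ x y * K₂ x y) (fun x y => L₁ x y * L₂ x y) :=
  ⟨hK₁.mul hK₂, hL₁.mul hL₂, .mul hK₁ hL₂ h₁ h₂⟩
end
end

section
/- Let X be a set, K : X × X → ℂ a positive definite kernel with reproducing kernel Hilbert space H(K), and let (φ_n)_{n∈ℕ} ⊂ H(K) be a Parseval frame for H(K). Then for all x, y ∈ X, K(x,y) = Σ_{n∈ℕ} φ_n(x)·conj(φ_n(y)), the series being (unconditionally) summable. -/
open scoped ComplexInnerProductSpace ComplexOrder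

noncomputable section

/-! The analysis operator `f ↦ (⟪φ n, f⟫)ₙ` of a Parseval frame is an isometry into `ℓ²`, hence
preserves inner products. Applied to the kernel sections `kH x`, `kH y`, whose inner product is
`K x y` by the reproducing property, this is the claimed expansion. -/

open scoped InnerProductSpace

section ParsevalFrame

variable {𝕜 E ι : Type*} [RCLike 𝕜] [NormedAddCommGroup E] [InnerProductSpace 𝕜 E]
  {φ : ι → E} (hφ : ∀ f : E, HasSum (fun i => ‖⟪φ i, f⟫_𝕜‖ ^ 2) (‖f‖ ^ 2))
include hφ

theorem memℓp_inner_of_parseval (f : E) : Memℓp (fun i => ⟪φ i, f⟫_𝕜) 2 := by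
  rw [memℓp_gen_iff (by norm_num)]
  simpa using (hφ f).summable

def parsevalAnalysis : E →ₗᵢ[𝕜] lp (fun _ : ι => 𝕜) 2 where
  toFun f := ⟨fun i => ⟪φ i, f⟫_𝕜, memℓp_inner_of_parseval hφ f⟩
  map_add' f g := by ext i; exact inner_add_right _ _ _
  map_smul' c f := by ext i; exact inner_smul_right _ _ _
  norm_map' f := by
    have hsq : ‖(⟨fun i => ⟪φ i, f⟫_𝕜, memℓp_inner_of_parseval hφ f⟩ :
        lp (fun _ : ι => 𝕜) 2)‖ ^ 2 = ‖f‖ ^ 2 := by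
      simpa [← (hφ f).tsum_eq] using lp.norm_rpow_eq_tsum (p := 2) (by norm_num)
        ⟨fun i => ⟪φ i, f⟫_𝕜, memℓp_inner_of_parseval hφ f⟩
    exact (sq_eq_sq₀ (norm_nonneg _) (norm_nonneg _)).mp hsq

theorem hasSum_inner_mul_inner_of_parseval (f g : E) :
    HasSum (fun i => ⟪f, φ i⟫_𝕜 * ⟪φ i, g⟫_𝕜) ⟪f, g⟫_𝕜 := by
  have h := lp.hasSum_inner (𝕜 := 𝕜) (parsevalAnalysis hφ f) (parsevalAnalysis hφ g)
  rw [LinearIsometry.inner_map_map] at h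
  convert h using 2 with i
  show _ = inner 𝕜 ⟪φ i, f⟫_𝕜 ⟪φ i, g⟫_𝕜
  rw [RCLike.inner_apply, inner_conj_symm, mul_comm]

end ParsevalFrame

theorem stmt_12_general {X : Type*} (K : X → X → ℂ)
    {H : Type*} [NormedAddCommGroup H] [InnerProductSpace ℂ H]
    (ι : H →ₗ[ℂ] (X → ℂ))
    (kH : X → H) (hkH : ∀ x, ι (kH x) = fun y => K y x)
    (hrep : ∀ (g : H) (x : X), ι g x = ⟪kH x, g⟫)
    (φ : ℕ → H)
    (hframe : ∀ f : H, HasSum (fun n => ‖⟪φ n, f⟫‖ ^ 2) (‖f‖ ^ 2)) :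
    ∀ x y : X, HasSum (fun n => ι (φ n) x * (starRingEnd ℂ) (ι (φ n) y)) (K x y) := by
  intro x y
  have hKxy : K x y = ⟪kH x, kH y⟫ := by rw [← hrep, hkH]
  simpa only [hKxy, hrep, inner_conj_symm] using
    hasSum_inner_mul_inner_of_parseval hframe (kH x) (kH y)

theorem stmt_12 {X : Type*} (K : X → X → ℂ) (hK : IsPosDefKernel K)
    {H : Type*} [NormedAddCommGroup H] [InnerProductSpace ℂ H] [CompleteSpace H]
    (ι : H →ₗ[ℂ] (X → ℂ)) (hι : Function.Injective ι)
    (kH : X → H) (hkH : ∀ x, ι (kH x) = fun y => K y x)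
    (hrep : ∀ (g : H) (x : X), ι g x = ⟪kH x, g⟫)
    (φ : ℕ → H)
    (hframe : ∀ f : H, HasSum (fun n => ‖⟪φ n, f⟫‖ ^ 2) (‖f‖ ^ 2)) :
    ∀ x y : X, HasSum (fun n => ι (φ n) x * (starRingEnd ℂ) (ι (φ n) y)) (K x y) :=
  stmt_12_general K ι kH hkH hrep φ hframe
end
end

section
/- Fix k ∈ ℕ, k ≥ 1, and let μ be the unitarily invariant Borel probability measure on the unit sphere ∂B_k of ℂ^k. Then for every z ∈ ℂ^k with ‖z‖ < 1, ∫_{∂B_k} |1 − ⟨z,b⟩|^{-2} dμ(b) ≤ 1/(1 − ‖z‖²); in particular the function b ↦ (1 − ⟨z,b⟩)^{-1} belongs to L²(∂B_k, μ). -/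
open MeasureTheory
open scoped ComplexInnerProductSpace

noncomputable section

/-!
Pushing `μ` forward along `b ↦ ⟪z, b⟫` gives a probability measure `ν` on the closed disc of
radius `‖z‖` which is invariant under rotations, because `b ↦ c • b` is unitary for `‖c‖ = 1`.
Rotation invariance makes the monomials `xⁿ` orthogonal in `L²(ν)`, so the partial sums of
`(1 - x)⁻¹ = ∑ xⁿ` satisfy
`∫ |∑_{n<N} xⁿ|² dν = ∑_{n<N} ∫ |x|^{2n} dν ≤ ∑ ‖z‖^{2n} ≤ 1 / (1 - ‖z‖²)`,
and dominated convergence passes to the limit. Membership in `L²` is just boundedness by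
`(1 - ‖z‖)⁻¹`.
-/

open Filter Topology Complex ComplexConjugate

lemma norm_inv_one_sub_le {x : ℂ} {r : ℝ} (hx : ‖x‖ ≤ r) (hr : r < 1) :
    ‖(1 - x)⁻¹‖ ≤ (1 - r)⁻¹ := by
  have : 1 - r ≤ ‖1 - x‖ := by linarith [norm_sub_norm_le 1 x, norm_one (α := ℂ)]
  rw [norm_inv]
  exact inv_anti₀ (by linarith) this

lemma norm_geom_sum_le_inv_one_sub {x : ℂ} {r : ℝ} (hx : ‖x‖ ≤ r) (hr : r < 1) (N : ℕ) :
    ‖∑ n ∈ Finset.range N, x ^ n‖ ≤ (1 - r)⁻¹ := by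
  have hr0 : 0 ≤ r := (norm_nonneg x).trans hx
  calc ‖∑ n ∈ Finset.range N, x ^ n‖ ≤ ∑ n ∈ Finset.range N, r ^ n :=
        norm_sum_le_of_le _ fun n _ =>
          (norm_pow x n).trans_le (pow_le_pow_left₀ (norm_nonneg x) hx n)
    _ ≤ r ^ 0 / (1 - r) := by
        rw [Finset.range_eq_Ico]; exact geom_sum_Ico_le_of_lt_one hr0 hr
    _ = (1 - r)⁻¹ := by rw [pow_zero, one_div]

lemma exists_norm_eq_one_conj_pow_mul_pow_eq_neg_one {m n : ℕ} (hmn : m ≠ n) :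
    ∃ c : ℂ, ‖c‖ = 1 ∧ conj c ^ m * c ^ n = -1 := by
  have hd : (n : ℝ) - m ≠ 0 := sub_ne_zero.mpr (by exact_mod_cast hmn.symm)
  set θ : ℝ := Real.pi / ((n : ℝ) - m)
  refine ⟨exp (θ * I), norm_exp_ofReal_mul_I θ, ?_⟩
  rw [← exp_conj, map_mul, conj_ofReal, conj_I, ← exp_nat_mul, ← exp_nat_mul, ← exp_add]
  convert exp_pi_mul_I using 2
  have : ((n : ℝ) - m) * θ = Real.pi := mul_div_cancel₀ _ hd
  rw [← this]
  push_cast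
  ring

def IsRotationInvariant (ν : Measure ℂ) : Prop :=
  ∀ c : ℂ, ‖c‖ = 1 → ν.map (c * ·) = ν

namespace IsRotationInvariant

variable {ν : Measure ℂ}

lemma integral_conj_pow_mul_pow_eq_zero (hν : IsRotationInvariant ν) {m n : ℕ} (hmn : m ≠ n) :
    ∫ x, conj x ^ m * x ^ n ∂ν = 0 := by
  obtain ⟨c, hc, hcmn⟩ := exists_norm_eq_one_conj_pow_mul_pow_eq_neg_one hmn
  have h := integral_map (μ := ν) (measurable_const_mul c).aemeasurable
    (f := fun x => conj x ^ m * x ^ n) (by fun_prop)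
  have hrot : ∀ x, conj (c * x) ^ m * (c * x) ^ n = -(conj x ^ m * x ^ n) := fun x => by
    rw [map_mul, mul_pow, mul_pow, ← neg_one_mul, ← hcmn]
    ring
  simp only [hν c hc, hrot, integral_neg] at h
  linear_combination h / 2

lemma integral_norm_geom_sum_sq [IsFiniteMeasure ν] (hν : IsRotationInvariant ν)
    (hν1 : ∀ᵐ x ∂ν, ‖x‖ ≤ 1) (N : ℕ) :
    ∫ x, ‖∑ n ∈ Finset.range N, x ^ n‖ ^ 2 ∂ν = ∑ n ∈ Finset.range N, ∫ x, ‖x‖ ^ (2 * n) ∂ν := by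
  have hint : ∀ m n : ℕ, Integrable (fun x => conj x ^ m * x ^ n) ν := fun m n =>
    Integrable.of_bound (by fun_prop) 1 <| by
      filter_upwards [hν1] with x hx
      simpa using mul_le_one₀ (pow_le_one₀ (norm_nonneg x) hx) (by positivity)
        (pow_le_one₀ (norm_nonneg x) hx)
  apply ofReal_injective
  calc ((∫ x, ‖∑ n ∈ Finset.range N, x ^ n‖ ^ 2 ∂ν : ℝ) : ℂ)
      = ∫ x, ∑ m ∈ Finset.range N, ∑ n ∈ Finset.range N, conj x ^ m * x ^ n ∂ν := by
        rw [← integral_complex_ofReal]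
        congr 1 with x
        rw [ofReal_pow, ← conj_mul', map_sum, Finset.sum_mul_sum]
        simp only [map_pow]
    _ = ∑ m ∈ Finset.range N, ∑ n ∈ Finset.range N, ∫ x, conj x ^ m * x ^ n ∂ν := by
        rw [integral_finsetSum _ fun m _ => integrable_finsetSum _ fun n _ => hint m n]
        exact Finset.sum_congr rfl fun m _ => integral_finsetSum _ fun n _ => hint m n
    _ = ∑ n ∈ Finset.range N, ∫ x, conj x ^ n * x ^ n ∂ν :=
        Finset.sum_congr rfl fun m hm => Finset.sum_eq_single_of_mem m hm
          fun n _ hnm => hν.integral_conj_pow_mul_pow_eq_zero hnm.symm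
    _ = ((∑ n ∈ Finset.range N, ∫ x, ‖x‖ ^ (2 * n) ∂ν : ℝ) : ℂ) := by
        push_cast
        refine Finset.sum_congr rfl fun n _ => ?_
        rw [← integral_complex_ofReal]
        congr 1 with x
        rw [← mul_pow, conj_mul', pow_mul]
        push_cast
        ring

lemma integral_norm_inv_one_sub_sq_le [IsProbabilityMeasure ν] (hν : IsRotationInvariant ν)
    {r : ℝ} (hr : r < 1) (hνr : ∀ᵐ x ∂ν, ‖x‖ ≤ r) :
    ∫ x, ‖(1 - x)⁻¹‖ ^ 2 ∂ν ≤ 1 / (1 - r ^ 2) := by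
  obtain ⟨x₀, hx₀⟩ := hνr.exists
  have hr0 : 0 ≤ r := (norm_nonneg x₀).trans hx₀
  have hr2 : r ^ 2 < 1 := by nlinarith
  have hpartial (N : ℕ) : ∫ x, ‖∑ n ∈ Finset.range N, x ^ n‖ ^ 2 ∂ν ≤ 1 / (1 - r ^ 2) := by
    rw [hν.integral_norm_geom_sum_sq (hνr.mono fun x hx => hx.trans hr.le)]
    calc ∑ n ∈ Finset.range N, ∫ x, ‖x‖ ^ (2 * n) ∂ν
        ≤ ∑ n ∈ Finset.range N, (r ^ 2) ^ n := by
          refine Finset.sum_le_sum fun n _ => ?_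
          have hmono : ∀ᵐ x ∂ν, ‖x‖ ^ (2 * n) ≤ (r ^ 2) ^ n := hνr.mono fun x hx => by
            rw [pow_mul]
            exact pow_le_pow_left₀ (by positivity) (pow_le_pow_left₀ (norm_nonneg x) hx 2) n
          simpa using integral_mono_of_nonneg (.of_forall fun x => by positivity)
            (integrable_const _) hmono
      _ ≤ (r ^ 2) ^ 0 / (1 - r ^ 2) := by
          rw [Finset.range_eq_Ico]; exact geom_sum_Ico_le_of_lt_one (by positivity) hr2
      _ = 1 / (1 - r ^ 2) := by rw [pow_zero]
  have hlim : Tendsto (fun N => ∫ x, ‖∑ n ∈ Finset.range N, x ^ n‖ ^ 2 ∂ν) atTop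
      (𝓝 (∫ x, ‖(1 - x)⁻¹‖ ^ 2 ∂ν)) := by
    refine tendsto_integral_of_dominated_convergence (fun _ => (1 - r)⁻¹ ^ 2)
      (fun N => by fun_prop) (integrable_const _) (fun N => ?_) ?_
    · filter_upwards [hνr] with x hx
      rw [Real.norm_of_nonneg (by positivity)]
      exact pow_le_pow_left₀ (norm_nonneg _) (norm_geom_sum_le_inv_one_sub hx hr N) 2
    · filter_upwards [hνr] with x hx
      exact ((hasSum_geometric_of_norm_lt_one (hx.trans_lt hr)).tendsto_sum_nat.norm).pow 2
  exact le_of_tendsto' hlim hpartial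

end IsRotationInvariant

lemma isRotationInvariant_map_inner {E : Type*} [NormedAddCommGroup E] [InnerProductSpace ℂ E]
    [MeasurableSpace E] [BorelSpace E] {μ : Measure E}
    (hμ : ∀ c : ℂ, ‖c‖ = 1 → μ.map (c • ·) = μ) (z : E) :
    IsRotationInvariant (μ.map (⟪z, ·⟫)) := fun c hc => by
  have hw : Measurable (⟪z, ·⟫ : E → ℂ) := (continuous_const.inner continuous_id).measurable
  have hcomm : (c * ·) ∘ (⟪z, ·⟫ : E → ℂ) = (⟪z, ·⟫) ∘ (c • ·) := by
    ext b; simp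
  rw [Measure.map_map (measurable_const_mul c) hw, hcomm,
    ← Measure.map_map hw (continuous_const_smul c).measurable, hμ c hc]

theorem stmt_14_general (k : ℕ)
    [MeasurableSpace (EuclideanSpace ℂ (Fin k))] [BorelSpace (EuclideanSpace ℂ (Fin k))]
    (μ : Measure (EuclideanSpace ℂ (Fin k))) [IsProbabilityMeasure μ]
    (hsupp : μ {b : EuclideanSpace ℂ (Fin k) | ‖b‖ = 1}ᶜ = 0)
    (hinv : ∀ U : EuclideanSpace ℂ (Fin k) ≃ₗᵢ[ℂ] EuclideanSpace ℂ (Fin k),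
      μ.map U = μ) :
    ∀ z : EuclideanSpace ℂ (Fin k), ‖z‖ < 1 →
      (∫ b, ‖(1 - ⟪z, b⟫)⁻¹‖ ^ 2 ∂μ) ≤ 1 / (1 - ‖z‖ ^ 2) ∧
      MemLp (fun b => (1 - ⟪z, b⟫)⁻¹) 2 μ := by
  intro z hz
  have hw : Measurable (⟪z, ·⟫ : EuclideanSpace ℂ (Fin k) → ℂ) :=
    (continuous_const.inner continuous_id).measurable
  have hf : Measurable fun x : ℂ => (1 - x)⁻¹ := (measurable_const.sub measurable_id).inv
  have hsphere : ∀ᵐ b ∂μ, ‖b‖ = 1 := ae_iff.2 hsupp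
  have hwz : ∀ᵐ b ∂μ, ‖⟪z, b⟫‖ ≤ ‖z‖ := hsphere.mono fun b hb => by
    simpa [hb] using norm_inner_le_norm (𝕜 := ℂ) z b
  have hrot : ∀ c : ℂ, ‖c‖ = 1 → μ.map (c • ·) = μ := fun c hc =>
    hinv ⟨LinearEquiv.smulOfNeZero ℂ _ c (norm_ne_zero_iff.1 (hc ▸ one_ne_zero)),
      fun b => by simp [norm_smul, hc]⟩
  have := Measure.isProbabilityMeasure_map (μ := μ) hw.aemeasurable
  refine ⟨?_, MemLp.of_bound (hf.comp hw).aestronglyMeasurable _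
    (hwz.mono fun b hb => norm_inv_one_sub_le hb hz)⟩
  rw [← integral_map hw.aemeasurable (f := fun x => ‖(1 - x)⁻¹‖ ^ 2)
    (hf.norm.pow_const 2).aestronglyMeasurable]
  exact (isRotationInvariant_map_inner hrot z).integral_norm_inv_one_sub_sq_le hz
    ((ae_map_iff hw.aemeasurable (measurableSet_le measurable_norm measurable_const)).2 hwz)

theorem stmt_14 (k : ℕ) (hk : 1 ≤ k)
    [MeasurableSpace (EuclideanSpace ℂ (Fin k))] [BorelSpace (EuclideanSpace ℂ (Fin k))]
    (μ : Measure (EuclideanSpace ℂ (Fin k))) [IsProbabilityMeasure μ]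
    (hsupp : μ {b : EuclideanSpace ℂ (Fin k) | ‖b‖ = 1}ᶜ = 0)
    (hinv : ∀ U : EuclideanSpace ℂ (Fin k) ≃ₗᵢ[ℂ] EuclideanSpace ℂ (Fin k),
      μ.map U = μ) :
    ∀ z : EuclideanSpace ℂ (Fin k), ‖z‖ < 1 →
      (∫ b, ‖(1 - ⟪z, b⟫)⁻¹‖ ^ 2 ∂μ) ≤ 1 / (1 - ‖z‖ ^ 2) ∧
      MemLp (fun b => (1 - ⟪z, b⟫)⁻¹) 2 μ :=
  stmt_14_general k μ hsupp hinv
end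
end
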